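/- arXiv:2501.07512 — 2 statements merged into one kernel-verified Lean document; each statement's English description precedes it below -/
import Mathlib

section
/- For all integers g ≥ 4, the quantity E := [coefficient of c₂·x^{g-1} in (1+x)^{2g-2}·exp(c₂·x(x²-4x+1)/(1+x)⁴)] minus [coefficient of c₂·x^{g-3} in the same series] equals -4(2g-5)(g+3)·(2g-6)!/(g!·(g-3)!); in particular this quantity is nonzero. Equivalently, writing in terms of binomial coefficients, (C(2g-6, g-4) - 4·C(2g-6, g-3) + C(2g-6, g-2)) - (C(2g-6, g-6) - 4·C(2g-6, g-5) + C(2g-6, g-4)) = -4(2g-5)(g+3)·(2g-6)!/(g!·(g-3)!) ≠ 0. -/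
/-! The recurrence `C(n, j + 1) (j + 1) = C(n, j) (n - j)` holds for `chQ` at every integer `j`
(both sides vanish for `j < 0`). With `g = m + 3`, it expresses the five coefficients
`C(2m, m + i)`, `-3 ≤ i ≤ 1`, as rational multiples of the central one `C(2m, m)`, and
`(2m)! / (g! (g - 3)!)` is `C(2m, m) / ((m + 1)(m + 2)(m + 3))`; so the identity becomes a
polynomial identity in `m`, and the sign is that of `-4 (2m + 1)(m + 6)`. -/

/-- Binomial coefficient `C(m, j)` with integer lower index, vanishing for `j < 0`
(and for `j > m`, as usual). -/
def chQ (m : ℕ) (j : ℤ) : ℚ := if 0 ≤ j then (m.choose j.toNat : ℚ) else 0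

theorem chQ_natCast (n k : ℕ) : chQ n k = n.choose k := by
  simp [chQ]

theorem chQ_of_neg {n : ℕ} {j : ℤ} (hj : j < 0) : chQ n j = 0 := by
  simp [chQ, hj.not_ge]

theorem chQ_succ_mul (n : ℕ) (j : ℤ) : chQ n (j + 1) * (j + 1) = chQ n j * (n - j) := by
  by_cases hj : 0 ≤ j
  · lift j to ℕ using hj
    rw [← Nat.cast_succ, chQ_natCast, chQ_natCast]
    rcases le_or_gt j n with hjn | hnj
    · exact_mod_cast Nat.choose_succ_right_eq n j
    · simp [Nat.choose_eq_zero_of_lt hnj, Nat.choose_eq_zero_of_lt (Nat.lt_succ_of_lt hnj)]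
  · rw [chQ_of_neg (not_le.mp hj), zero_mul]
    rcases (show j + 1 < 0 ∨ j + 1 = 0 by omega) with h | h
    · rw [chQ_of_neg h, zero_mul]
    · simp [show (j : ℚ) + 1 = 0 by exact_mod_cast h]

theorem chQ_sub_one (n : ℕ) {j : ℤ} (hj : j ≠ n + 1) :
    chQ n (j - 1) = chQ n j * j / (n + 1 - j) := by
  have := chQ_succ_mul n (j - 1)
  push_cast [sub_add_cancel] at this
  rw [eq_div_iff (sub_ne_zero.mpr (by exact_mod_cast hj.symm))]
  linear_combination -this

theorem chQ_two_mul_coeff_diff_eq (m : ℕ) :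
    (chQ (2 * m) ((m : ℤ) - 1) - 4 * chQ (2 * m) m + chQ (2 * m) ((m : ℤ) + 1))
      - (chQ (2 * m) ((m : ℤ) - 3) - 4 * chQ (2 * m) ((m : ℤ) - 2) + chQ (2 * m) ((m : ℤ) - 1))
      = -4 * (2 * m + 1) * (m + 6) * (2 * m).choose m / ((m + 1) * (m + 2) * (m + 3)) := by
  set c : ℚ := ((2 * m).choose m : ℚ)
  have h0 : chQ (2 * m) m = c := chQ_natCast _ _
  have hp1 : chQ (2 * m) ((m : ℤ) + 1) = c * m / (m + 1) := by
    have := chQ_succ_mul (2 * m) m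
    push_cast at this
    rw [eq_div_iff (by positivity), this, h0]; ring
  have hm1 : chQ (2 * m) ((m : ℤ) - 1) = c * m / (m + 1) := by
    rw [chQ_sub_one _ (by omega), h0]; push_cast; ring
  have hm2 : chQ (2 * m) ((m : ℤ) - 2) = chQ (2 * m) ((m : ℤ) - 1) * (m - 1) / (m + 2) := by
    rw [show (m : ℤ) - 2 = m - 1 - 1 by ring, chQ_sub_one _ (by omega)]
    push_cast; ring
  have hm3 : chQ (2 * m) ((m : ℤ) - 3) = chQ (2 * m) ((m : ℤ) - 2) * (m - 2) / (m + 3) := by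
    rw [show (m : ℤ) - 3 = m - 2 - 1 by ring, chQ_sub_one _ (by omega)]
    push_cast; ring
  rw [hm3, hm2, hm1, h0, hp1]
  field_simp
  ring

theorem factorial_two_mul_div_eq_choose_div (m : ℕ) :
    ((2 * m).factorial : ℚ) / ((m + 3).factorial * m.factorial)
      = (2 * m).choose m / ((m + 1) * (m + 2) * (m + 3)) := by
  rw [Nat.cast_choose ℚ (by omega : m ≤ 2 * m), show 2 * m - m = m by omega]
  push_cast [Nat.factorial_succ]
  field_simp
  ring

/-- For `g ≥ 4`, the difference of the coefficients of `c₂·x^{g-1}` and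
`c₂·x^{g-3}` in `(1+x)^{2g-2}·exp(c₂·x(x²-4x+1)/(1+x)⁴)`, written in terms of binomial
coefficients (the coefficient of `c₂·x^k` being `C(2g-6,k-3) - 4C(2g-6,k-2) + C(2g-6,k-1)`),
equals `-4(2g-5)(g+3)·(2g-6)!/(g!(g-3)!)`; in particular it is nonzero. -/
theorem hyperelliptic_degree_two_coefficient (g : ℕ) (hg : 4 ≤ g) :
    ((chQ (2 * g - 6) ((g : ℤ) - 4) - 4 * chQ (2 * g - 6) ((g : ℤ) - 3)
        + chQ (2 * g - 6) ((g : ℤ) - 2))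
      - (chQ (2 * g - 6) ((g : ℤ) - 6) - 4 * chQ (2 * g - 6) ((g : ℤ) - 5)
        + chQ (2 * g - 6) ((g : ℤ) - 4)))
      = -4 * (2 * (g : ℚ) - 5) * ((g : ℚ) + 3) * ((2 * g - 6).factorial : ℚ)
          / ((g.factorial : ℚ) * ((g - 3).factorial : ℚ))
    ∧ ((chQ (2 * g - 6) ((g : ℤ) - 4) - 4 * chQ (2 * g - 6) ((g : ℤ) - 3)
        + chQ (2 * g - 6) ((g : ℤ) - 2))
      - (chQ (2 * g - 6) ((g : ℤ) - 6) - 4 * chQ (2 * g - 6) ((g : ℤ) - 5)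
        + chQ (2 * g - 6) ((g : ℤ) - 4))) ≠ 0 := by
  obtain ⟨m, rfl⟩ : ∃ m, g = m + 3 := ⟨g - 3, by omega⟩
  have hdiff := chQ_two_mul_coeff_diff_eq m
  have hc : 0 < (2 * m).choose m := Nat.choose_pos (by omega)
  rw [show 2 * (m + 3) - 6 = 2 * m by omega, Nat.add_sub_cancel, mul_div_assoc,
    factorial_two_mul_div_eq_choose_div]
  have hidx : ∀ i : ℤ, ((m + 3 : ℕ) : ℤ) - i = m - (i - 3) := fun i => by push_cast; ring
  simp only [hidx]
  norm_num
  rw [hdiff]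
  exact ⟨by ring, div_ne_zero (by simp only [neg_mul, neg_ne_zero]; positivity) (by positivity)⟩
end

section
/- For all integers g ≥ 4 and 2 ≤ t ≤ g/2, the inequality B_{t-1}·B_{g-t} + B_t·B_{g-t-1} - 2^{g-1} < B_{g-1} holds, where B_k = C(2k,k) is the middle binomial coefficient. -/
/-!
The ratio `B_{k+1} / B_k = 2(2k+1)/(k+1)` increases with `k`, so among pairs of indices with a
fixed sum the product `B_a B_b` is largest for the most spread-out pair. Hence the two products
are at most `B_1 B_{g-2} = 2 B_{g-2}` and `B_2 B_{g-3} = 6 B_{g-3}`, and `2 B_{m+1} + 6 B_m ≤ B_{m+2}`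
holds as soon as `m ≥ 4`; the term `2^{g-1}` absorbs the remaining cases `g ≤ 6`.
-/

/-- The middle (central) binomial coefficient `B_k = C(2k, k)`. -/
def midBinom (k : ℕ) : ℕ := (2 * k).choose k

theorem midBinom_eq_centralBinom : midBinom = Nat.centralBinom := rfl

namespace Nat

theorem centralBinom_succ_mul_le_mul_centralBinom_succ {a b : ℕ} (hab : a ≤ b) :
    centralBinom (a + 1) * centralBinom b ≤ centralBinom a * centralBinom (b + 1) := by
  refine le_of_mul_le_mul_left (a := (a + 1) * (b + 1)) ?_ (by positivity)
  calc (a + 1) * (b + 1) * (centralBinom (a + 1) * centralBinom b)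
      = (a + 1) * centralBinom (a + 1) * ((b + 1) * centralBinom b) := by ring
    _ = 2 * ((2 * a + 1) * (b + 1)) * (centralBinom a * centralBinom b) := by
        rw [succ_mul_centralBinom_succ]; ring
    _ ≤ 2 * ((a + 1) * (2 * b + 1)) * (centralBinom a * centralBinom b) := by
        gcongr 2 * ?_ * _; nlinarith
    _ = (a + 1) * centralBinom a * ((b + 1) * centralBinom (b + 1)) := by
        rw [succ_mul_centralBinom_succ]; ring
    _ = (a + 1) * (b + 1) * (centralBinom a * centralBinom (b + 1)) := by ring

theorem centralBinom_add_mul_le {c i j : ℕ} (hij : i ≤ j) :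
    centralBinom (c + i) * centralBinom (c + j) ≤ centralBinom c * centralBinom (c + i + j) := by
  induction i generalizing j with
  | zero => simp
  | succ i ih =>
    calc centralBinom (c + i + 1) * centralBinom (c + j)
        ≤ centralBinom (c + i) * centralBinom (c + j + 1) :=
          centralBinom_succ_mul_le_mul_centralBinom_succ (by omega)
      _ ≤ centralBinom c * centralBinom (c + i + (j + 1)) := ih (j := j + 1) (by omega)
      _ = centralBinom c * centralBinom (c + (i + 1) + j) := by ring_nf

theorem centralBinom_mul_le {a b c d : ℕ} (hmin : min c d ≤ min a b) (hsum : a + b = c + d) :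
    centralBinom a * centralBinom b ≤ centralBinom c * centralBinom d := by
  wlog hcd : c ≤ d generalizing c d
  · rw [mul_comm (centralBinom c)]
    exact this (by omega) (by omega) (by omega)
  obtain ⟨i, rfl⟩ := exists_add_of_le (show c ≤ a by omega)
  obtain ⟨j, rfl⟩ := exists_add_of_le (show c ≤ b by omega)
  obtain rfl : d = c + i + j := by omega
  rcases le_total i j with hij | hji
  · exact centralBinom_add_mul_le hij
  · rw [mul_comm, add_right_comm]
    exact centralBinom_add_mul_le hji

theorem two_mul_centralBinom_succ_add_six_mul_le {m : ℕ} (hm : 4 ≤ m) :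
    2 * centralBinom (m + 1) + 6 * centralBinom m ≤ centralBinom (m + 2) := by
  have h₁ := succ_mul_centralBinom_succ m
  have h₂ := succ_mul_centralBinom_succ (m + 1)
  have h₂' : (m + 1) * (m + 2) * centralBinom (m + 2) =
      4 * (2 * m + 1) * (2 * m + 3) * centralBinom m := by
    calc _ = (m + 1) * ((m + 1 + 1) * centralBinom (m + 1 + 1)) := by ring
      _ = 2 * (2 * m + 3) * ((m + 1) * centralBinom (m + 1)) := by rw [h₂]; ring
      _ = _ := by rw [h₁]; ring
  -- `4(2m+1)(2m+3) - (14m² + 38m + 20) = 2(m-4)(m+1)`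
  have hcoeff : 14 * m ^ 2 + 38 * m + 20 ≤ 4 * (2 * m + 1) * (2 * m + 3) := by nlinarith
  refine le_of_mul_le_mul_left (a := (m + 1) * (m + 2)) ?_ (by positivity)
  nlinarith [Nat.mul_le_mul_right (centralBinom m) hcoeff]

theorem two_mul_centralBinom_succ_add_six_mul_lt {m : ℕ} (hm : 1 ≤ m) :
    2 * centralBinom (m + 1) + 6 * centralBinom m < centralBinom (m + 2) + 2 ^ (m + 2) := by
  rcases lt_or_ge m 4 with hm4 | hm4
  · interval_cases m <;> decide
  · have := two_mul_centralBinom_succ_add_six_mul_le hm4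
    have := Nat.two_pow_pos (m + 2)
    omega

end Nat

theorem bielliptic_euler_char_lt_jacobian_general (g t : ℕ) (ht : 2 ≤ t)
    (htg : 2 * t ≤ g) :
    (midBinom (t - 1) : ℤ) * midBinom (g - t) + midBinom t * midBinom (g - t - 1)
      - 2 ^ (g - 1) < midBinom (g - 1) := by
  obtain ⟨m, rfl⟩ : ∃ m, g = m + 3 := ⟨g - 3, by omega⟩
  have h₁ : midBinom (t - 1) * midBinom (m + 3 - t) ≤ 2 * midBinom (m + 1) :=
    Nat.centralBinom_mul_le (c := 1) (by omega) (by omega)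
  have h₂ : midBinom t * midBinom (m + 3 - t - 1) ≤ 6 * midBinom m :=
    Nat.centralBinom_mul_le (c := 2) (by omega) (by omega)
  have h₃ := Nat.two_mul_centralBinom_succ_add_six_mul_lt (m := m) (by omega)
  rw [sub_lt_iff_lt_add, show m + 3 - 1 = m + 2 by omega]
  rw [midBinom_eq_centralBinom] at *
  exact_mod_cast (show _ < _ by omega)

/-- For all integers `g ≥ 4` and `2 ≤ t ≤ g/2`, one has
`B_{t-1}·B_{g-t} + B_t·B_{g-t-1} - 2^{g-1} < B_{g-1}`. -/
theorem bielliptic_euler_char_lt_jacobian (g t : ℕ) (hg : 4 ≤ g) (ht : 2 ≤ t)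
    (htg : 2 * t ≤ g) :
    (midBinom (t - 1) : ℤ) * midBinom (g - t) + midBinom t * midBinom (g - t - 1)
      - 2 ^ (g - 1) < midBinom (g - 1) :=
  bielliptic_euler_char_lt_jacobian_general g t ht htg
end
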